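/- Let D be a loopless digon-free digraph on n vertices, let 2 ≤ k ≤ min{l, n−1}, and let α and β be acyclic l-colorings of D such that β has one color class C_1^β of size 2 and k−1 singleton color classes C_2^β,…,C_k^β, and α(u) = β(u) for every vertex u outside C_1^β ∪ ⋯ ∪ C_k^β. Then d(α,β) ≤ k+1 in the dicoloring graph of D. -/

import Mathlib

/-!
Only the `k + 1` vertices of `C₁ ∪ ⋯ ∪ C_k` (colors of `β`) can have `α v ≠ β v`; recolor them one
at a time from `α v` to `β v`. A counting argument shows that at every stage some remaining vertex
has its target color held by at most one other vertex, and in a loopless digon-free digraph any two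
vertices induce an acyclic set, so each intermediate coloring is acyclic.
-/

/-- A set `S` of vertices induces an acyclic subdigraph of the digraph with
arc relation `A`: there is no directed cycle within `S`. -/
def AcyclicOn {V : Type*} (A : V → V → Prop) (S : Set V) : Prop :=
  ∀ v, ¬ Relation.TransGen (fun x y => x ∈ S ∧ y ∈ S ∧ A x y) v v

/-- An acyclic `k`-coloring: every color class induces an acyclic subdigraph. -/
def IsAcyclicColoring {V : Type*} (A : V → V → Prop) (k : ℕ) (α : V → Fin k) : Prop :=
  ∀ c : Fin k, AcyclicOn A {v | α v = c}

/-- The `k`-dicoloring graph: vertices are acyclic `k`-colorings, two colorings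
adjacent when they differ on exactly one vertex. -/
def DicolGraph {V : Type*} (A : V → V → Prop) (k : ℕ) :
    SimpleGraph {α : V → Fin k // IsAcyclicColoring A k α} where
  Adj α β := ∃! v, α.1 v ≠ β.1 v
  symm := ⟨by
    rintro α β ⟨v, hv, hu⟩
    exact ⟨v, Ne.symm hv, fun w hw => hu w (Ne.symm hw)⟩⟩
  loopless := ⟨by
    rintro α ⟨v, hv, -⟩
    exact hv rfl⟩

/-- The cyclic circulant tournament on `ZMod (2n+1)` with jumps `1,…,n`. -/
def CycArc (n : ℕ) (a b : ZMod (2*n+1)) : Prop := (b - a).val ∈ Finset.Icc 1 n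

/-- The tournament obtained from `CycArc n` by reversing the jump `n`. -/
def RevArc (n : ℕ) (a b : ZMod (2*n+1)) : Prop :=
  (b - a).val ∈ Finset.Icc 1 (n-1) ∨ (b - a).val = n + 1

/-- A forbidden triangle in `C_{2n+1}⟨n⟩`. -/
def ForbiddenTriangle (n : ℕ) (S : Set (ZMod (2*n+1))) : Prop :=
  ∃ i : ZMod (2*n+1), S = {i, i + n, i + n + 1}

section Recoloring

variable {V : Type*} {A : V → V → Prop} {l : ℕ}

theorem AcyclicOn.mono {s t : Set V} (h : AcyclicOn A t) (hst : s ⊆ t) : AcyclicOn A s :=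
  fun v hv =>
    h v (Relation.TransGen.mono (fun _ _ hxy => ⟨hst hxy.1, hst hxy.2.1, hxy.2.2⟩) v v hv)

theorem acyclicOn_pair (hloop : ∀ v, ¬ A v v) (hdigon : ∀ u v, A u v → ¬ A v u) (a b : V) :
    AcyclicOn A {a, b} := by
  intro v hv
  set r := fun x y => x ∈ ({a, b} : Set V) ∧ y ∈ ({a, b} : Set V) ∧ A x y
  -- Two consecutive arcs inside `{a, b}` would form a loop or a digon, so `r` is vacuously
  -- transitive and a closed `r`-walk is a single loop.
  have : IsTrans V r := ⟨by
    rintro x y z ⟨hx, hy, hxy⟩ ⟨-, hz, hyz⟩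
    have hxz : x = z := by
      simp only [Set.mem_insert_iff, Set.mem_singleton_iff] at hx hy hz
      rcases hx with rfl | rfl <;> rcases hy with rfl | rfl <;> rcases hz with rfl | rfl <;>
        first | rfl | exact absurd hxy (hloop _) | exact absurd hyz (hloop _)
    exact absurd hyz (hxz ▸ hdigon x y hxy)⟩
  rw [Relation.transGen_eq_self] at hv
  exact hloop v hv.2.2

theorem IsAcyclicColoring.update (hloop : ∀ v, ¬ A v v) (hdigon : ∀ u v, A u v → ¬ A v u)
    [DecidableEq V] {γ : V → Fin l} (hγ : IsAcyclicColoring A l γ) {v b : V} {c : Fin l}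
    (hb : ∀ w ≠ v, γ w = c → w = b) : IsAcyclicColoring A l (Function.update γ v c) := by
  intro c'
  by_cases hc : c' = c
  · subst hc
    refine (acyclicOn_pair hloop hdigon v b).mono fun w hw => ?_
    by_cases hwv : w = v
    · exact Or.inl hwv
    · exact Or.inr (hb w hwv (by simpa [hwv] using hw))
  · refine (hγ c').mono fun w hw => ?_
    by_cases hwv : w = v
    · subst hwv
      exact absurd (by simpa using hw) (Ne.symm hc)
    · simpa [hwv] using hw

theorem dicolGraph_adj_of_eq_update [DecidableEq V]
    {x y : {γ : V → Fin l // IsAcyclicColoring A l γ}} {v : V} {c : Fin l}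
    (hy : y.1 = Function.update x.1 v c) (hv : x.1 v ≠ c) :
    (DicolGraph A l).Adj x y :=
  ⟨v, by simpa [hy] using hv, fun w hw => by_contra fun hwv => hw (by simp [hy, hwv])⟩

theorem exists_walk_length_le_of_eq_piecewise [DecidableEq V]
    (hloop : ∀ v, ¬ A v v) (hdigon : ∀ u v, A u v → ¬ A v u)
    {α β : V → Fin l} (hβ : IsAcyclicColoring A l β)
    (hstep : ∀ R : Finset V, R.Nonempty → (∀ v ∈ R, α v ≠ β v) →
      ∃ v ∈ R, ∃ b, ∀ w ≠ v, R.piecewise α β w = β v → w = b)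
    (R : Finset V) (hR : ∀ v ∈ R, α v ≠ β v) (x : {γ : V → Fin l // IsAcyclicColoring A l γ})
    (hx : x.1 = R.piecewise α β) :
    ∃ p : (DicolGraph A l).Walk x ⟨β, hβ⟩, p.length ≤ R.card := by
  induction R using Finset.strongInduction generalizing x with
  | H R ih =>
  rcases R.eq_empty_or_nonempty with rfl | hne
  · obtain rfl : x = ⟨β, hβ⟩ := Subtype.ext (hx.trans (Finset.piecewise_empty α β))
    exact ⟨.nil, le_rfl⟩
  obtain ⟨v, hvR, b, hb⟩ := hstep R hne hR
  rw [← hx] at hb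
  let y : {γ : V → Fin l // IsAcyclicColoring A l γ} :=
    ⟨Function.update x.1 v (β v), x.2.update hloop hdigon hb⟩
  have hy : y.1 = (R.erase v).piecewise α β := by
    change Function.update x.1 v (β v) = _
    ext w
    by_cases hwv : w = v
    · subst hwv; simp
    · by_cases hwR : w ∈ R <;> simp [hx, hwv, hwR]
  have hxy : (DicolGraph A l).Adj x y :=
    dicolGraph_adj_of_eq_update rfl (by simpa [hx, hvR] using hR v hvR)
  obtain ⟨p, hp⟩ := ih (R.erase v) (Finset.erase_ssubset hvR)
    (fun w hw => hR w (Finset.mem_of_mem_erase hw)) y hy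
  exact ⟨.cons hxy p, (Nat.succ_le_succ hp).trans_eq (Finset.card_erase_add_one hvR)⟩

end Recoloring

section Counting

open Finset

variable {V κ : Type*} [DecidableEq κ] {α β : V → κ} {R : Finset V}

theorem card_filter_add_sum_card_filter_le {c₀ : κ} {S : Finset V} (hinj : Set.InjOn β S)
    (hc₀ : ∀ v ∈ S, β v ≠ c₀) :
    #{w ∈ R | α w = c₀} + ∑ v ∈ S, #{w ∈ R | α w = β v} ≤ #R := by
  have hc₀S : c₀ ∉ S.image β := by simpa using hc₀
  have := card_filter_le R (fun w => α w ∈ insert c₀ (S.image β))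
  rwa [← sum_card_fiberwise_eq_card_filter, sum_insert hc₀S, sum_image hinj] at this

variable [Fintype V] [DecidableEq V]

theorem one_lt_card_filter_of_forall_exists_ne {p : V → Prop} [DecidablePred p] {v : V}
    (h : ∀ b, ∃ w ≠ v, p w ∧ w ≠ b) : 1 < #{w | w ≠ v ∧ p w} := by
  obtain ⟨w₁, hw₁v, hw₁, -⟩ := h v
  obtain ⟨w₂, hw₂v, hw₂, hw₂₁⟩ := h w₁
  exact one_lt_card.mpr ⟨w₁, by simp [hw₁v, hw₁], w₂, by simp [hw₂v, hw₂], hw₂₁.symm⟩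

/-- Such a `v` can be recolored from `α v` to `β v`: its new class has at most two vertices. -/
theorem exists_mem_forall_piecewise_eq_imp_eq {c₀ : κ} (hc₀ : #{v | β v = c₀} ≤ 2)
    (hclass : ∀ v, α v ≠ β v → β v = c₀ ∨ ∀ w, β w = β v → w = v)
    (hne : R.Nonempty) (hR : ∀ v ∈ R, α v ≠ β v) :
    ∃ v ∈ R, ∃ b, ∀ w ≠ v, R.piecewise α β w = β v → w = b := by
  by_contra! hstuck
  set S := {v ∈ R | β v ≠ c₀}
  set T := {v ∈ R | β v = c₀}
  set F := {w ∈ R | α w = c₀}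
  have hsingleton : ∀ v ∈ S, ∀ w, β w = β v → w = v := fun v hv =>
    ((hclass v (hR v (mem_filter.mp hv).1)).resolve_left (mem_filter.mp hv).2)
  have hfiber : ∀ v ∈ S, 2 ≤ #{w ∈ R | α w = β v} := by
    intro v hv
    refine (one_lt_card_filter_of_forall_exists_ne (hstuck v (mem_filter.mp hv).1)).trans_le
      (card_le_card fun w hw => ?_)
    simp only [mem_filter, mem_univ, true_and] at hw ⊢
    by_cases hwR : w ∈ R
    · simpa [hwR] using hw.2
    · exact absurd (hsingleton v hv w (by simpa [hwR] using hw.2)) hw.1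
  have hfibers : #F + ∑ v ∈ S, #{w ∈ R | α w = β v} ≤ #R :=
    card_filter_add_sum_card_filter_le (fun v hv w _ hvw => (hsingleton v hv w hvw.symm).symm)
      (fun v hv => (mem_filter.mp hv).2)
  have hFS : #F ≤ #S := card_le_card fun w hw => by
    simp only [F, S, mem_filter] at hw ⊢
    exact ⟨hw.1, fun h => hR w hw.1 (hw.2.trans h.symm)⟩
  have hTF : #T ≤ #F := by
    rcases T.eq_empty_or_nonempty with hT | ⟨u, hu⟩
    · simp [hT]
    set K : Finset V := {v | β v = c₀}
    have hTK : T ⊆ K := fun v hv => by simpa [K] using (mem_filter.mp hv).2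
    have hblocked := one_lt_card_filter_of_forall_exists_ne (hstuck u (mem_filter.mp hu).1)
    have hsub : ({w | w ≠ u ∧ R.piecewise α β w = β u} : Finset V) ⊆ F ∪ (K \ T) := by
      intro w hw
      simp only [T, F, K, mem_filter, mem_univ, true_and, mem_union, mem_sdiff] at hw hu ⊢
      by_cases hwR : w ∈ R
      · exact Or.inl ⟨hwR, by simpa [hwR, hu.2] using hw.2⟩
      · exact Or.inr ⟨by simpa [hwR, hu.2] using hw.2, fun h => hwR h.1⟩
    have := (card_le_card hsub).trans (card_union_le _ _)
    rw [card_sdiff_of_subset hTK] at this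
    have := card_le_card hTK
    omega
  have hST : #T + #S = #R := card_filter_add_card_filter_not _
  have hSsum : 2 * #S ≤ ∑ v ∈ S, #{w ∈ R | α w = β v} := by
    simpa [mul_comm] using sum_le_sum hfiber
  -- `#F + 2 #S ≤ #R = #T + #S ≤ #F + #S` forces `S = ∅`, hence `F = ∅` and `T = ∅`.
  have := card_pos.mpr hne
  omega

end Counting

theorem ncard_setOf_ne_le_sum {V ι κ : Type*} [Finite V] {α β : V → κ} {C : ι → κ}
    {t : Finset ι} (hagree : ∀ u, (∀ i ∈ t, β u ≠ C i) → α u = β u) :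
    {v | α v ≠ β v}.ncard ≤ ∑ i ∈ t, {v | β v = C i}.ncard := by
  refine (Set.ncard_le_ncard fun v hv => ?_).trans (t.set_ncard_biUnion_le _)
  by_contra hvC
  exact hv (hagree v fun i hi hvi => hvC (Set.mem_biUnion hi hvi))

theorem stmt2 {V : Type*} [Fintype V]
    (A : V → V → Prop) (hloop : ∀ v, ¬ A v v) (hdigon : ∀ u v, A u v → ¬ A v u)
    (k l : ℕ) (hk2 : 2 ≤ k)
    (α β : V → Fin l)
    (hα : IsAcyclicColoring A l α) (hβ : IsAcyclicColoring A l β)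
    (C : Fin k → Fin l)
    (hbig : Set.ncard {v | β v = C ⟨0, by omega⟩} = 2)
    (hsing : ∀ i : Fin k, i ≠ ⟨0, by omega⟩ → Set.ncard {v | β v = C i} = 1)
    (hagree : ∀ u : V, (∀ i : Fin k, β u ≠ C i) → α u = β u) :
    (DicolGraph A l).Reachable ⟨α, hα⟩ ⟨β, hβ⟩ ∧
      (DicolGraph A l).dist ⟨α, hα⟩ ⟨β, hβ⟩ ≤ k + 1 := by
  classical
  set i₀ : Fin k := ⟨0, by omega⟩
  set D : Finset V := {v | α v ≠ β v}
  have hclass : ∀ v, α v ≠ β v → β v = C i₀ ∨ ∀ w, β w = β v → w = v := by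
    intro v hv
    obtain ⟨i, hi⟩ : ∃ i, β v = C i := not_forall_not.mp fun h => hv (hagree v h)
    rcases eq_or_ne i i₀ with rfl | hii₀
    · exact Or.inl hi
    · exact Or.inr fun w hw =>
        Set.ncard_le_one_iff_subsingleton.mp (hsing i hii₀).le (by simp [hw, hi]) hi
  have hstep R := exists_mem_forall_piecewise_eq_imp_eq (R := R)
    (by rw [← hbig, Set.ncard_eq_toFinset_card', Set.toFinset_ofPred]) hclass
  obtain ⟨p, hp⟩ := exists_walk_length_le_of_eq_piecewise hloop hdigon hβ hstep D
    (fun v hv => by simpa [D] using hv) ⟨α, hα⟩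
    (by ext v; by_cases hv : α v = β v <;> simp [D, hv])
  have hD : D.card ≤ k + 1 := by
    have hsum : ∑ i, {v | β v = C i}.ncard = k + 1 := by
      rw [← Finset.add_sum_erase _ _ (Finset.mem_univ i₀), hbig,
        Finset.sum_congr rfl fun i hi => hsing i (Finset.ne_of_mem_erase hi), Finset.sum_const,
        Finset.card_erase_of_mem (Finset.mem_univ i₀), Finset.card_univ, Fintype.card_fin,
        smul_eq_mul, mul_one]
      omega
    calc D.card = {v | α v ≠ β v}.ncard := by rw [← Set.ncard_coe_finset]; simp [D]
      _ ≤ ∑ i, {v | β v = C i}.ncard := ncard_setOf_ne_le_sum (by simpa using hagree)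
      _ = k + 1 := hsum
  exact ⟨⟨p⟩, (SimpleGraph.dist_le p).trans (hp.trans hD)⟩
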